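/- Let g(θ) = f̂₀ + 2f̂₁cos(θ) be monotonically decreasing on [0,π] and let X_nᵀX_n = T_{n,0,−1/(2+h)}(g_M) as in Example 2 with g_M(θ) = 1 + (2+h)² + 2(2+h)cos(θ), h = 1/n. Then for j = 2, …, n−1, the j-th largest eigenvalue λ_j(X_nᵀX_n) of X_nᵀX_n lies between g_M evaluated at the grid points θ_{j,n}^{(0,0)} = jπ/(n+1) and θ_{j,n}^{(0,−1)} = jπ/(n+1/2): g_M(θ_{j,n}^{(0,−1)}) ≤ λ_j(X_nᵀX_n) ≤ g_M(θ_{j,n}^{(0,0)}). -/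

import Mathlib

open Matrix Real

/-- Lower bidiagonal matrix with diagonal `2 + 1/n` and subdiagonal `1`. -/
noncomputable def bidiagX (n : ℕ) : Matrix (Fin n) (Fin n) ℝ :=
  Matrix.of fun i j =>
    if i = j then 2 + 1 / (n : ℝ)
    else if (j : ℕ) + 1 = (i : ℕ) then 1 else 0

/-! ### Auxiliary development -/

noncomputable def triT (n : ℕ) (a d : ℝ) : Matrix (Fin n) (Fin n) ℝ :=
  Matrix.of fun i k =>
    (if (i : ℕ) = (k : ℕ) then d else 0) + (if (i : ℕ) + 1 = (k : ℕ) then a else 0)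
      + (if (k : ℕ) + 1 = (i : ℕ) then a else 0)

noncomputable def cornerM (n : ℕ) (c : ℝ) : Matrix (Fin n) (Fin n) ℝ :=
  Matrix.of fun i k => if (i : ℕ) = n - 1 ∧ (k : ℕ) = n - 1 then c else 0

lemma dot_self_nonneg' {n : ℕ} (x : Fin n → ℝ) : 0 ≤ x ⬝ᵥ x :=
  Finset.sum_nonneg fun i _ => mul_self_nonneg (x i)

lemma dot_self_pos' {n : ℕ} {x : Fin n → ℝ} (hx : x ≠ 0) : 0 < x ⬝ᵥ x := by
  rcases Function.ne_iff.1 hx with ⟨i, hi⟩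
  exact Finset.sum_pos' (fun k _ => mul_self_nonneg _)
    ⟨i, Finset.mem_univ i, mul_self_pos.2 hi⟩

lemma sum_smul_dot {n : ℕ} {ι : Type*} (s : Finset ι) (g : ι → ℝ)
    (v : ι → (Fin n → ℝ)) (w : Fin n → ℝ) :
    (∑ k ∈ s, g k • v k) ⬝ᵥ w = ∑ k ∈ s, g k * (v k ⬝ᵥ w) := by
  simp only [dotProduct, Finset.sum_apply, Pi.smul_apply, smul_eq_mul,
    Finset.sum_mul, Finset.mul_sum]
  rw [Finset.sum_comm]
  simp [mul_assoc]

lemma dot_sum_smul {n : ℕ} {ι : Type*} (s : Finset ι) (g : ι → ℝ)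
    (v : ι → (Fin n → ℝ)) (w : Fin n → ℝ) :
    w ⬝ᵥ (∑ k ∈ s, g k • v k) = ∑ k ∈ s, g k * (w ⬝ᵥ v k) := by
  rw [dotProduct_comm, sum_smul_dot]
  exact Finset.sum_congr rfl fun k _ => by rw [dotProduct_comm]

lemma li_of_orth {n : ℕ} {ι : Type*} (v : ι → (Fin n → ℝ))
    (ho : ∀ k l, k ≠ l → v k ⬝ᵥ v l = 0) (hnz : ∀ k, v k ⬝ᵥ v k ≠ 0) :
    LinearIndependent ℝ v := by
  rw [linearIndependent_iff']
  intro s g hsum i hi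
  have h := congrArg (fun x => x ⬝ᵥ v i) hsum
  simp only [zero_dotProduct, sum_smul_dot] at h
  rw [Finset.sum_eq_single i (fun k _ hk => by rw [ho k i hk, mul_zero])
    (fun h => absurd hi h)] at h
  exact (mul_eq_zero.1 h).resolve_right (hnz i)

lemma quad_eq {n : ℕ} {ι : Type*} [Fintype ι] (M : Matrix (Fin n) (Fin n) ℝ)
    (v : ι → Fin n → ℝ) (α : ι → ℝ) (hv : ∀ k, M.mulVec (v k) = α k • v k)
    (ho : ∀ k l, k ≠ l → v k ⬝ᵥ v l = 0) (c : ι → ℝ) (x : Fin n → ℝ)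
    (hx : x = ∑ k, c k • v k) :
    x ⬝ᵥ M.mulVec x = ∑ k, α k * (c k ^ 2 * (v k ⬝ᵥ v k)) ∧
    x ⬝ᵥ x = ∑ k, c k ^ 2 * (v k ⬝ᵥ v k) := by
  have hdv : ∀ k, x ⬝ᵥ v k = c k * (v k ⬝ᵥ v k) := by
    intro k
    rw [hx, sum_smul_dot]
    rw [Finset.sum_eq_single k (fun l _ hl => by rw [ho l k hl, mul_zero])
      (fun h => absurd (Finset.mem_univ k) h)]
  constructor
  · have hMx : M.mulVec x = ∑ k, (c k * α k) • v k := by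
      rw [hx, show M *ᵥ (∑ k, c k • v k) = M.mulVecLin (∑ k, c k • v k) from rfl, map_sum]
      refine Finset.sum_congr rfl fun k _ => ?_
      rw [_root_.map_smul, Matrix.mulVecLin_apply, hv, smul_smul]
    rw [hMx, dot_sum_smul]
    refine Finset.sum_congr rfl fun k _ => ?_
    rw [hdv]; ring
  · conv_lhs => rw [hx, sum_smul_dot]
    refine Finset.sum_congr rfl fun k _ => ?_
    rw [← hx, show v k ⬝ᵥ x = x ⬝ᵥ v k from dotProduct_comm _ _, hdv]; ring

lemma weyl_core {n : ℕ} (A B : Matrix (Fin n) (Fin n) ℝ)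
    (hAB : ∀ x, x ⬝ᵥ A.mulVec x ≤ x ⬝ᵥ B.mulVec x)
    (v w : Fin n → (Fin n → ℝ)) (α β : Fin n → ℝ)
    (hv : ∀ k, A.mulVec (v k) = α k • v k) (hw : ∀ k, B.mulVec (w k) = β k • w k)
    (hvo : ∀ k l, k ≠ l → v k ⬝ᵥ v l = 0) (hwo : ∀ k l, k ≠ l → w k ⬝ᵥ w l = 0)
    (hvn : ∀ k, v k ⬝ᵥ v k ≠ 0) (hwn : ∀ k, w k ⬝ᵥ w k ≠ 0)
    (hα : Antitone α) (hβ : Antitone β) (j : Fin n) : α j ≤ β j := by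
  classical
  set vv : {k : Fin n // k ≤ j} → (Fin n → ℝ) := fun k => v k.1 with hvv
  set ww : {k : Fin n // j ≤ k} → (Fin n → ℝ) := fun k => w k.1 with hww
  set V := Submodule.span ℝ (Set.range vv) with hV
  set W := Submodule.span ℝ (Set.range ww) with hW
  have liv : LinearIndependent ℝ vv :=
    (li_of_orth v hvo hvn).comp Subtype.val Subtype.val_injective
  have liw : LinearIndependent ℝ ww :=
    (li_of_orth w hwo hwn).comp Subtype.val Subtype.val_injective
  have cardV : Fintype.card {k : Fin n // k ≤ j} = (j : ℕ) + 1 := by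
    rw [Fintype.card_subtype]
    rw [show Finset.filter (fun k => k ≤ j) Finset.univ = Finset.Iic j by ext k; simp]
    exact Fin.card_Iic j
  have cardW : Fintype.card {k : Fin n // j ≤ k} = n - (j : ℕ) := by
    rw [Fintype.card_subtype]
    rw [show Finset.filter (fun k => j ≤ k) Finset.univ = Finset.Ici j by ext k; simp]
    exact Fin.card_Ici j
  have frV : Module.finrank ℝ V = (j : ℕ) + 1 := by
    rw [hV, finrank_span_eq_card liv, cardV]
  have frW : Module.finrank ℝ W = n - (j : ℕ) := by
    rw [hW, finrank_span_eq_card liw, cardW]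
  have htot : Module.finrank ℝ (Fin n → ℝ) = n := by simp
  have hsup := Submodule.finrank_sup_add_finrank_inf_eq V W
  have hle : Module.finrank ℝ ↥(V ⊔ W) ≤ n := le_trans (Submodule.finrank_le _) (le_of_eq htot)
  have hinf : 0 < Module.finrank ℝ ↥(V ⊓ W) := by
    have hjn : (j : ℕ) < n := j.isLt
    omega
  obtain ⟨x, hxVW, hx0⟩ : ∃ x ∈ V ⊓ W, x ≠ 0 := by
    by_contra hcon
    push_neg at hcon
    have : V ⊓ W = ⊥ := by
      rw [Submodule.eq_bot_iff]; exact fun y hy => hcon y hy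
    rw [this, finrank_bot] at hinf
    exact lt_irrefl 0 hinf
  obtain ⟨hxV, hxW⟩ := hxVW
  obtain ⟨c, hc⟩ := (Submodule.mem_span_range_iff_exists_fun ℝ).1 hxV
  obtain ⟨d, hd⟩ := (Submodule.mem_span_range_iff_exists_fun ℝ).1 hxW
  obtain ⟨hqa, hna⟩ := quad_eq A vv (fun k => α k.1)
    (fun k => hv k.1) (fun k l hkl => hvo k.1 l.1 (fun h => hkl (Subtype.ext h))) c x hc.symm
  obtain ⟨hqb, hnb⟩ := quad_eq B ww (fun k => β k.1)
    (fun k => hw k.1) (fun k l hkl => hwo k.1 l.1 (fun h => hkl (Subtype.ext h))) d x hd.symm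
  have hxx : 0 < x ⬝ᵥ x := dot_self_pos' hx0
  have h1 : α j * (x ⬝ᵥ x) ≤ x ⬝ᵥ A.mulVec x := by
    rw [hqa, hna, Finset.mul_sum]
    refine Finset.sum_le_sum fun k _ => ?_
    have h2 : α j ≤ α k.1 := hα k.2
    have h3 : 0 ≤ c k ^ 2 * (vv k ⬝ᵥ vv k) :=
      mul_nonneg (sq_nonneg _) (dot_self_nonneg' _)
    exact mul_le_mul_of_nonneg_right h2 h3
  have h4 : x ⬝ᵥ B.mulVec x ≤ β j * (x ⬝ᵥ x) := by
    rw [hqb, hnb, Finset.mul_sum]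
    refine Finset.sum_le_sum fun k _ => ?_
    exact mul_le_mul_of_nonneg_right (hβ k.2) (mul_nonneg (sq_nonneg _) (dot_self_nonneg' _))
  have := (h1.trans (hAB x)).trans h4
  exact le_of_mul_le_mul_right (by linarith) hxx

lemma sum_ite_nat {n : ℕ} (f : Fin n → ℝ) (c : ℕ) :
    (∑ k : Fin n, if c = (k : ℕ) then f k else 0) = if h : c < n then f ⟨c, h⟩ else 0 := by
  by_cases h : c < n
  · rw [dif_pos h, Finset.sum_eq_single (⟨c, h⟩ : Fin n)]
    · simp
    · intro b _ hb
      rw [if_neg]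
      intro he; exact hb (Fin.ext he.symm)
    · intro hm; exact absurd (Finset.mem_univ _) hm
  · rw [dif_neg h]
    apply Finset.sum_eq_zero
    intro k _
    rw [if_neg]
    intro he
    exact h (he ▸ k.isLt)

lemma triT_corner_symm (n : ℕ) (a d c : ℝ) :
    (triT n a d + cornerM n c)ᵀ = triT n a d + cornerM n c := by
  ext i k
  simp only [Matrix.transpose_apply, Matrix.add_apply, triT, cornerM, Matrix.of_apply]
  split_ifs <;> first | ring1 | (exfalso; omega)

lemma eigen_tri {n : ℕ} (hn : 2 ≤ n) (a d c θ : ℝ)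
    (hb : a * Real.sin (((n : ℝ) + 1) * θ) = c * Real.sin ((n : ℝ) * θ)) :
    (triT n a d + cornerM n c) *ᵥ (fun k : Fin n => Real.sin ((((k : ℕ) : ℝ) + 1) * θ))
      = (d + 2 * a * Real.cos θ) • (fun k : Fin n => Real.sin ((((k : ℕ) : ℝ) + 1) * θ)) := by
  set s : ℕ → ℝ := fun t => Real.sin ((t : ℝ) * θ) with hs
  have keynat : ∀ t : ℕ, s t + s (t + 2) = 2 * Real.cos θ * s (t + 1) := by
    intro t
    have key : Real.sin ((((t : ℝ) + 1) * θ) - θ) + Real.sin ((((t : ℝ) + 1) * θ) + θ)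
        = 2 * Real.cos θ * Real.sin (((t : ℝ) + 1) * θ) := by
      rw [Real.sin_sub, Real.sin_add]; ring
    have e1 : (((t : ℝ) + 1) * θ) - θ = (t : ℝ) * θ := by ring
    have e2 : (((t : ℝ) + 1) * θ) + θ = ((t : ℝ) + 2) * θ := by ring
    rw [e1, e2] at key
    simp only [hs]
    push_cast
    exact key
  have hbs : a * s (n + 1) = c * s n := by
    simp only [hs]; push_cast; exact hb
  have hu : (fun k : Fin n => Real.sin ((((k : ℕ) : ℝ) + 1) * θ)) = fun k : Fin n => s ((k : ℕ) + 1) := by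
    funext k; simp only [hs]; push_cast; ring_nf
  rw [hu]
  set u : Fin n → ℝ := fun k => s ((k : ℕ) + 1) with hudef
  funext i
  have expand : ((triT n a d + cornerM n c) *ᵥ u) i
      = ∑ k : Fin n, ((if (i : ℕ) = (k : ℕ) then d else 0) + (if (i : ℕ) + 1 = (k : ℕ) then a else 0)
        + (if (k : ℕ) + 1 = (i : ℕ) then a else 0)
        + if (i : ℕ) = n - 1 ∧ (k : ℕ) = n - 1 then c else 0) * u k := by
    simp only [Matrix.mulVec, dotProduct, Matrix.add_apply, triT, cornerM, Matrix.of_apply]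
  have hsplit : ((triT n a d + cornerM n c) *ᵥ u) i
      = (∑ k : Fin n, if (i : ℕ) = (k : ℕ) then d * u k else 0)
      + (∑ k : Fin n, if (i : ℕ) + 1 = (k : ℕ) then a * u k else 0)
      + (∑ k : Fin n, if (i : ℕ) - 1 = (k : ℕ) ∧ 0 < (i : ℕ) then a * u k else 0)
      + (∑ k : Fin n, if n - 1 = (k : ℕ) ∧ (i : ℕ) = n - 1 then c * u k else 0) := by
    rw [expand, ← Finset.sum_add_distrib, ← Finset.sum_add_distrib, ← Finset.sum_add_distrib]
    refine Finset.sum_congr rfl fun k _ => ?_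
    have hik : k.val < n := k.isLt
    have hii : i.val < n := i.isLt
    split_ifs <;> first | ring1 | (exfalso; omega)
  have S1 : (∑ k : Fin n, if (i : ℕ) = (k : ℕ) then d * u k else 0) = d * s ((i : ℕ) + 1) := by
    rw [sum_ite_nat (fun k => d * u k) (i : ℕ), dif_pos i.isLt]
  have S2 : (∑ k : Fin n, if (i : ℕ) + 1 = (k : ℕ) then a * u k else 0)
      = if (i : ℕ) + 1 < n then a * s ((i : ℕ) + 2) else 0 := by
    rw [sum_ite_nat (fun k => a * u k) ((i : ℕ) + 1)]
    split_ifs with h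
    · rfl
    · rfl
  have S3 : (∑ k : Fin n, if (i : ℕ) - 1 = (k : ℕ) ∧ 0 < (i : ℕ) then a * u k else 0)
      = if 0 < (i : ℕ) then a * s (i : ℕ) else 0 := by
    by_cases h0 : 0 < (i : ℕ)
    · rw [if_pos h0]
      have : ∀ k : Fin n, (if (i : ℕ) - 1 = (k : ℕ) ∧ 0 < (i : ℕ) then a * u k else 0)
          = (if (i : ℕ) - 1 = (k : ℕ) then a * u k else 0) := by
        intro k; split_ifs <;> first | rfl | (exfalso; omega)
      rw [Finset.sum_congr rfl fun k _ => this k,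
        sum_ite_nat (fun k => a * u k) ((i : ℕ) - 1), dif_pos (by omega : (i : ℕ) - 1 < n)]
      have : (i : ℕ) - 1 + 1 = (i : ℕ) := by omega
      simp only [hudef, this]
    · rw [if_neg h0]
      apply Finset.sum_eq_zero
      intro k _
      rw [if_neg]; intro hh; exact h0 hh.2
  have S4 : (∑ k : Fin n, if n - 1 = (k : ℕ) ∧ (i : ℕ) = n - 1 then c * u k else 0)
      = if (i : ℕ) = n - 1 then c * s n else 0 := by
    by_cases h0 : (i : ℕ) = n - 1
    · rw [if_pos h0]
      have : ∀ k : Fin n, (if n - 1 = (k : ℕ) ∧ (i : ℕ) = n - 1 then c * u k else 0)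
          = (if n - 1 = (k : ℕ) then c * u k else 0) := by
        intro k; split_ifs <;> first | rfl | (exfalso; omega)
      rw [Finset.sum_congr rfl fun k _ => this k,
        sum_ite_nat (fun k => c * u k) (n - 1), dif_pos (by omega : n - 1 < n)]
      have : n - 1 + 1 = n := by omega
      simp only [hudef, this]
    · rw [if_neg h0]
      apply Finset.sum_eq_zero
      intro k _
      rw [if_neg]; intro hh; exact h0 hh.2
  rw [hsplit, S1, S2, S3, S4]
  show _ = (d + 2 * a * Real.cos θ) * s ((i : ℕ) + 1)
  have hii : (i : ℕ) < n := i.isLt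
  by_cases h1 : (i : ℕ) + 1 < n
  · rw [if_pos h1, if_neg (by omega : ¬ (i : ℕ) = n - 1)]
    by_cases h0 : 0 < (i : ℕ)
    · rw [if_pos h0]
      have hthis := keynat (i : ℕ)
      linear_combination a * hthis
    · rw [if_neg h0]
      have hi0 : (i : ℕ) = 0 := by omega
      have h00 : s 0 = 0 := by simp [hs]
      have hthis := keynat 0
      rw [hi0]
      linear_combination a * hthis - a * h00
  · have hieq : (i : ℕ) = n - 1 := by omega
    rw [if_neg h1, if_pos hieq, if_pos (by omega : 0 < (i : ℕ))]
    have hk := keynat (n - 1)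
    have e1 : n - 1 + 1 = n := by omega
    have e2 : n - 1 + 2 = n + 1 := by omega
    rw [e1, e2] at hk
    rw [hieq, e1]
    linear_combination a * hk - hbs

lemma XtX_eq (n : ℕ) :
    (bidiagX n)ᵀ * bidiagX n
      = triT n (2 + 1 / (n : ℝ)) (1 + (2 + 1 / (n : ℝ)) ^ 2) + cornerM n (-1) := by
  set a : ℝ := 2 + 1 / (n : ℝ) with ha
  ext i k
  rw [Matrix.mul_apply]
  have hX : ∀ m j : Fin n, bidiagX n m j
      = (if m = j then a else 0) + (if (j : ℕ) + 1 = (m : ℕ) then 1 else 0) := by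
    intro m j
    simp only [bidiagX, Matrix.of_apply]
    split_ifs with h1 h2
    · exfalso; rw [h1] at h2; omega
    · ring
    · ring
    · ring
  have summand : ∀ m : Fin n, (bidiagX n)ᵀ i m * bidiagX n m k
      = (if (i : ℕ) = (m : ℕ) then
          ((if (i : ℕ) = (k : ℕ) then a * a else 0) + (if (k : ℕ) + 1 = (i : ℕ) then a else 0))
         else 0)
        + (if (i : ℕ) + 1 = (m : ℕ) then
          ((if (i : ℕ) + 1 = (k : ℕ) then a else 0) + (if (i : ℕ) = (k : ℕ) then 1 else 0))
         else 0) := by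
    intro m
    rw [Matrix.transpose_apply, hX, hX]
    have h1 : (m = i) ↔ ((i : ℕ) = (m : ℕ)) := by
      constructor
      · intro h; rw [h]
      · intro h; exact Fin.ext h.symm
    have h2 : (m = k) ↔ ((k : ℕ) = (m : ℕ)) := by
      constructor
      · intro h; rw [h]
      · intro h; exact Fin.ext h.symm
    rw [if_congr h1 rfl rfl, if_congr h2 rfl rfl]
    split_ifs <;> first | ring1 | (exfalso; omega)
  rw [Finset.sum_congr rfl fun m _ => summand m, Finset.sum_add_distrib,
    sum_ite_nat _ (i : ℕ), sum_ite_nat _ ((i : ℕ) + 1), dif_pos i.isLt]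
  simp only [triT, cornerM, Matrix.add_apply, Matrix.of_apply]
  have hik : (i : ℕ) < n := i.isLt
  have hkk : (k : ℕ) < n := k.isLt
  by_cases h : (i : ℕ) + 1 < n
  · rw [dif_pos h]
    split_ifs <;> first | ring1 | (exfalso; omega)
  · rw [dif_neg h]
    split_ifs <;> first | ring1 | (exfalso; omega)

lemma corner_quad (n : ℕ) (c : ℝ) (hc : 0 ≤ c) (x : Fin n → ℝ) :
    0 ≤ x ⬝ᵥ (cornerM n c *ᵥ x) := by
  apply Finset.sum_nonneg
  intro i _
  rw [show (cornerM n c *ᵥ x) i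
    = ∑ k : Fin n, (if (i : ℕ) = n - 1 ∧ (k : ℕ) = n - 1 then c else 0) * x k
    from rfl, Finset.mul_sum]
  apply Finset.sum_nonneg
  intro k _
  by_cases h : (i : ℕ) = n - 1 ∧ (k : ℕ) = n - 1
  · rw [if_pos h]
    have : i = k := Fin.ext (by omega)
    rw [this]
    nlinarith [mul_self_nonneg (x k), hc]
  · rw [if_neg h, zero_mul, mul_zero]

lemma orth_eig {n : ℕ} {M : Matrix (Fin n) (Fin n) ℝ} (hM : Mᵀ = M)
    {u v : Fin n → ℝ} {lu lv : ℝ}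
    (hu : M *ᵥ u = lu • u) (hv : M *ᵥ v = lv • v) (hne : lu ≠ lv) : u ⬝ᵥ v = 0 := by
  have h1 : u ⬝ᵥ (M *ᵥ v) = lv * (u ⬝ᵥ v) := by
    rw [hv, dotProduct_smul]; rfl
  have h2 : u ⬝ᵥ (M *ᵥ v) = lu * (u ⬝ᵥ v) := by
    rw [Matrix.dotProduct_mulVec, ← Matrix.mulVec_transpose, hM, hu, smul_dotProduct]; rfl
  have : (lu - lv) * (u ⬝ᵥ v) = 0 := by rw [sub_mul, h2.symm.trans h1]; ring
  rcases mul_eq_zero.1 this with h | h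
  · exact absurd (by linarith : lu = lv) hne
  · exact h

lemma strictAnti_eigfam {n : ℕ} {D a : ℝ} (hD : (n : ℝ) < D) (ha : 0 < a) (d : ℝ) :
    StrictAnti (fun k : Fin n => d + 2 * a * Real.cos ((((k : ℕ) : ℝ) + 1) * π / D)) := by
  intro k l hkl
  have hD0 : (0 : ℝ) < D := lt_of_le_of_lt (Nat.cast_nonneg n) hD
  have hkn : (((k : ℕ) : ℝ) + 1) ≤ (n : ℝ) := by exact_mod_cast Nat.succ_le_of_lt k.isLt
  have hln : (((l : ℕ) : ℝ) + 1) ≤ (n : ℝ) := by exact_mod_cast Nat.succ_le_of_lt l.isLt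
  have hmemk : (((k : ℕ) : ℝ) + 1) * π / D ∈ Set.Icc 0 π := by
    constructor
    · positivity
    · rw [div_le_iff₀ hD0]
      nlinarith [pi_pos]
  have hmeml : (((l : ℕ) : ℝ) + 1) * π / D ∈ Set.Icc 0 π := by
    constructor
    · positivity
    · rw [div_le_iff₀ hD0]
      nlinarith [pi_pos]
  have hlt : (((k : ℕ) : ℝ) + 1) * π / D < (((l : ℕ) : ℝ) + 1) * π / D := by
    have : ((k : ℕ) : ℝ) < ((l : ℕ) : ℝ) := by exact_mod_cast hkl
    gcongr
  have := Real.strictAntiOn_cos hmemk hmeml hlt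
  simp only
  nlinarith [this]

lemma theta_pos_lt_pi {n : ℕ} {D : ℝ} (hD : (n : ℝ) < D) (k : Fin n) :
    0 < (((k : ℕ) : ℝ) + 1) * π / D ∧ (((k : ℕ) : ℝ) + 1) * π / D < π := by
  have hD0 : (0 : ℝ) < D := lt_of_le_of_lt (Nat.cast_nonneg n) hD
  have hkn : (((k : ℕ) : ℝ) + 1) ≤ (n : ℝ) := by exact_mod_cast Nat.succ_le_of_lt k.isLt
  constructor
  · positivity
  · rw [div_lt_iff₀ hD0]
    nlinarith [pi_pos]

lemma sinb0 {n : ℕ} (k : Fin n) :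
    Real.sin (((n : ℝ) + 1) * ((((k : ℕ) : ℝ) + 1) * π / ((n : ℝ) + 1))) = 0 := by
  have hne : ((n : ℝ) + 1) ≠ 0 := by positivity
  rw [show ((n : ℝ) + 1) * ((((k : ℕ) : ℝ) + 1) * π / ((n : ℝ) + 1))
    = ((((k : ℕ) + 1 : ℕ)) : ℝ) * π by push_cast; field_simp]
  exact Real.sin_nat_mul_pi _

lemma sinb1 {n : ℕ} (k : Fin n) :
    Real.sin (((n : ℝ) + 1) * ((((k : ℕ) : ℝ) + 1) * π / ((n : ℝ) + 1 / 2)))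
      = - Real.sin ((n : ℝ) * ((((k : ℕ) : ℝ) + 1) * π / ((n : ℝ) + 1 / 2))) := by
  have hne : ((n : ℝ) + 1 / 2) ≠ 0 := by positivity
  have key : ((n : ℝ) + 1) * ((((k : ℕ) : ℝ) + 1) * π / ((n : ℝ) + 1 / 2))
      = (((k : ℕ) + 1 : ℕ) : ℝ) * (2 * π)
        - (n : ℝ) * ((((k : ℕ) : ℝ) + 1) * π / ((n : ℝ) + 1 / 2)) := by
    push_cast
    field_simp
    ring
  rw [key, Real.sin_sub, Real.cos_nat_mul_two_pi,
    show ((((k : ℕ) + 1 : ℕ)) : ℝ) * (2 * π) = (((2 * ((k : ℕ) + 1) : ℕ)) : ℝ) * π by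
      push_cast; ring,
    Real.sin_nat_mul_pi]
  ring

/-- With `g_M(θ) = 1 + (2+h)² + 2(2+h)cos θ`, `h = 1/n`, the `j`-th largest
eigenvalue of `XₙᵀXₙ` (for `j = 2, …, n-1`, 1-based) satisfies
`g_M(jπ/(n+1/2)) ≤ λ_j(XₙᵀXₙ) ≤ g_M(jπ/(n+1))`. -/
theorem stmt_7 (n : ℕ)
    (gM : ℝ → ℝ)
    (hgM : ∀ θ, gM θ = 1 + (2 + 1 / (n : ℝ)) ^ 2 + 2 * (2 + 1 / (n : ℝ)) * Real.cos θ)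
    (hA : ((bidiagX n)ᵀ * bidiagX n).IsHermitian)
    (μ : Fin n → ℝ) (hμ : Antitone μ)
    (hperm : ∃ e : Equiv.Perm (Fin n), ∀ i, μ i = hA.eigenvalues (e i))
    (j : Fin n) (hj1 : 1 ≤ (j : ℕ)) (hj2 : (j : ℕ) ≤ n - 2) :
    gM ((((j : ℕ) : ℝ) + 1) * π / ((n : ℝ) + 1/2)) ≤ μ j ∧
    μ j ≤ gM ((((j : ℕ) : ℝ) + 1) * π / ((n : ℝ) + 1)) := by
  obtain ⟨e, he⟩ := hperm
  have hjn : (j : ℕ) < n := j.isLt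
  have hn2 : 2 ≤ n := by omega
  set a : ℝ := 2 + 1 / (n : ℝ) with ha
  set d : ℝ := 1 + a ^ 2 with hd
  have hn0 : (0 : ℝ) ≤ 1 / (n : ℝ) := by positivity
  have ha0 : 0 < a := by rw [ha]; linarith
  have ha1 : 1 ≤ a := by rw [ha]; linarith
  set A : Matrix (Fin n) (Fin n) ℝ := (bidiagX n)ᵀ * bidiagX n with hAdef
  have hXtX : A = triT n a d + cornerM n (-1) := XtX_eq n
  set T0 : Matrix (Fin n) (Fin n) ℝ := triT n a d + cornerM n 0 with hT0
  set T1 : Matrix (Fin n) (Fin n) ℝ := triT n a d + cornerM n (-a) with hT1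
  -- quadratic form comparisons
  have hcorner_add : ∀ c1 c2 : ℝ, cornerM n c1 + cornerM n c2 = cornerM n (c1 + c2) := by
    intro c1 c2
    ext i k
    simp only [Matrix.add_apply, cornerM, Matrix.of_apply]
    split_ifs <;> ring
  have hA_T1 : A = T1 + cornerM n (a - 1) := by
    rw [hXtX, hT1, add_assoc, hcorner_add, show (-a + (a - 1) : ℝ) = -1 by ring]
  have hT0_A : T0 = A + cornerM n 1 := by
    rw [hXtX, hT0, add_assoc, hcorner_add, show (-1 + 1 : ℝ) = (0 : ℝ) by ring]
  have hq1 : ∀ x : Fin n → ℝ, x ⬝ᵥ T1.mulVec x ≤ x ⬝ᵥ A.mulVec x := by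
    intro x
    have expand : x ⬝ᵥ A.mulVec x
        = x ⬝ᵥ T1.mulVec x + x ⬝ᵥ ((cornerM n (a - 1)).mulVec x) := by
      rw [hA_T1, Matrix.add_mulVec, dotProduct_add]
    have hcq := corner_quad n (a - 1) (by linarith) x
    linarith
  have hq2 : ∀ x : Fin n → ℝ, x ⬝ᵥ A.mulVec x ≤ x ⬝ᵥ T0.mulVec x := by
    intro x
    have expand : x ⬝ᵥ T0.mulVec x
        = x ⬝ᵥ A.mulVec x + x ⬝ᵥ ((cornerM n 1).mulVec x) := by
      rw [hT0_A, Matrix.add_mulVec, dotProduct_add]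
    have hcq := corner_quad n 1 (by norm_num) x
    linarith
  -- eigenvector families
  set θ0 : Fin n → ℝ := fun k => (((k : ℕ) : ℝ) + 1) * π / ((n : ℝ) + 1) with hθ0
  set θ1 : Fin n → ℝ := fun k => (((k : ℕ) : ℝ) + 1) * π / ((n : ℝ) + 1 / 2) with hθ1
  set w0 : Fin n → (Fin n → ℝ) :=
    fun k => fun i : Fin n => Real.sin ((((i : ℕ) : ℝ) + 1) * θ0 k) with hw0
  set w1 : Fin n → (Fin n → ℝ) :=
    fun k => fun i : Fin n => Real.sin ((((i : ℕ) : ℝ) + 1) * θ1 k) with hw1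
  set α0 : Fin n → ℝ := fun k => d + 2 * a * Real.cos (θ0 k) with hα0
  set α1 : Fin n → ℝ := fun k => d + 2 * a * Real.cos (θ1 k) with hα1
  have heig0 : ∀ k, T0.mulVec (w0 k) = α0 k • w0 k := by
    intro k
    exact eigen_tri hn2 a d 0 (θ0 k) (by rw [hθ0]; simp only; rw [sinb0]; ring)
  have heig1 : ∀ k, T1.mulVec (w1 k) = α1 k • w1 k := by
    intro k
    exact eigen_tri hn2 a d (-a) (θ1 k) (by rw [hθ1]; simp only; rw [sinb1]; ring)
  have hD0 : (n : ℝ) < (n : ℝ) + 1 := by linarith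
  have hD1 : (n : ℝ) < (n : ℝ) + 1 / 2 := by linarith
  have hsa0 : StrictAnti α0 := strictAnti_eigfam hD0 ha0 d
  have hsa1 : StrictAnti α1 := strictAnti_eigfam hD1 ha0 d
  have horth0 : ∀ k l, k ≠ l → w0 k ⬝ᵥ w0 l = 0 := by
    intro k l hkl
    exact orth_eig (triT_corner_symm n a d 0) (heig0 k) (heig0 l) (hsa0.injective.ne hkl)
  have horth1 : ∀ k l, k ≠ l → w1 k ⬝ᵥ w1 l = 0 := by
    intro k l hkl
    exact orth_eig (triT_corner_symm n a d (-a)) (heig1 k) (heig1 l) (hsa1.injective.ne hkl)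
  have hnz0 : ∀ k, w0 k ⬝ᵥ w0 k ≠ 0 := by
    intro k
    refine (dot_self_pos' ?_).ne'
    apply Function.ne_iff.2
    refine ⟨⟨0, by omega⟩, ?_⟩
    obtain ⟨hp, hl⟩ := theta_pos_lt_pi hD0 k
    have hsin : 0 < Real.sin (θ0 k) := Real.sin_pos_of_pos_of_lt_pi hp hl
    simp only [hw0, Pi.zero_apply]
    norm_num
    exact hsin.ne'
  have hnz1 : ∀ k, w1 k ⬝ᵥ w1 k ≠ 0 := by
    intro k
    refine (dot_self_pos' ?_).ne'
    apply Function.ne_iff.2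
    refine ⟨⟨0, by omega⟩, ?_⟩
    obtain ⟨hp, hl⟩ := theta_pos_lt_pi hD1 k
    have hsin : 0 < Real.sin (θ1 k) := Real.sin_pos_of_pos_of_lt_pi hp hl
    simp only [hw1, Pi.zero_apply]
    norm_num
    exact hsin.ne'
  -- the eigenvector family of A itself
  set v : Fin n → (Fin n → ℝ) := fun i => ⇑(hA.eigenvectorBasis (e i)) with hv
  have hveig : ∀ i, A.mulVec (v i) = μ i • v i := by
    intro i
    rw [he i]
    exact hA.mulVec_eigenvectorBasis (e i)
  have hvdot : ∀ i k, v i ⬝ᵥ v k = if e i = e k then 1 else 0 := by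
    intro i k
    have h := hA.eigenvectorBasis.orthonormal
    rw [orthonormal_iff_ite] at h
    have h2 := h (e i) (e k)
    rw [EuclideanSpace.inner_eq_star_dotProduct] at h2
    rw [dotProduct_comm]
    simpa [hv] using h2
  have hvorth : ∀ i k, i ≠ k → v i ⬝ᵥ v k = 0 := by
    intro i k hik
    rw [hvdot, if_neg (fun h => hik (e.injective h))]
  have hvnz : ∀ i, v i ⬝ᵥ v i ≠ 0 := by
    intro i
    rw [hvdot, if_pos rfl]
    norm_num
  constructor
  · -- lower bound
    have := weyl_core T1 A hq1 w1 v α1 μ heig1 hveig horth1 hvorth hnz1 hvnz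
      hsa1.antitone hμ j
    calc gM ((((j : ℕ) : ℝ) + 1) * π / ((n : ℝ) + 1/2)) = α1 j := by
          rw [hgM]
      _ ≤ μ j := this
  · -- upper bound
    have := weyl_core A T0 hq2 v w0 μ α0 hveig heig0 hvorth horth0 hvnz hnz0
      hμ hsa0.antitone j
    calc μ j ≤ α0 j := this
      _ = gM ((((j : ℕ) : ℝ) + 1) * π / ((n : ℝ) + 1)) := by
          rw [hgM]
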